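/- arXiv:2103.01433 — 6 statements merged into one kernel-verified Lean document; each statement's English description precedes it below -/
import Mathlib

section
/- Let 0 < p̂ < q̂ and σ² ≥ 0. Define f_U(x) := (e^{−(x−σ²)/q̂} − e^{−(x−σ²)/p̂})/(q̂ − p̂) and f_V(x) := (1/q̂) e^{−(x−σ²)/q̂} for x ≥ σ² (both 0 for x < σ²), and set χ := p̂/q̂ ∈ (0,1). Then (1/2) ∫_{σ²}^∞ |f_U(x) − f_V(x)| dx = χ^{1/(1−χ)}. Moreover, the set {x ≥ σ² : f_U(x) ≥ f_V(x)} equals the interval [σ² + (q̂p̂/(q̂−p̂)) ln(q̂/p̂), ∞). -/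
/-!
Write `t = x - σ²`. On `[σ², ∞)` the difference `f_U - f_V` is
`(χ e^{-t/q̂} - e^{-t/p̂}) / (q̂ - p̂)`, which is negative before and nonnegative after
`t₀ = (q̂p̂/(q̂-p̂)) ln(q̂/p̂)`. Both densities have mass one, so the difference integrates to zero
and half its `L¹` norm is its integral over `[σ² + t₀, ∞)`, namely `e^{-t₀/p̂} = χ^{1/(1-χ)}`.
-/

open MeasureTheory Real Set

theorem integral_abs_eq_two_mul_setIntegral_of_integral_eq_zero {α : Type*} [MeasurableSpace α]
    {μ : Measure α} {g : α → ℝ} {t : Set α} (ht : MeasurableSet t) (hg : Integrable g μ)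
    (hzero : ∫ x, g x ∂μ = 0) (hpos : ∀ x ∈ t, 0 ≤ g x) (hneg : ∀ x ∉ t, g x ≤ 0) :
    ∫ x, |g x| ∂μ = 2 * ∫ x in t, g x ∂μ := by
  have habs : (fun x => |g x|) = fun x => 2 * t.indicator g x - g x := by
    funext x
    by_cases hx : x ∈ t
    · rw [indicator_of_mem hx, abs_of_nonneg (hpos x hx)]; ring
    · rw [indicator_of_notMem hx, abs_of_nonpos (hneg x hx)]; ring
  rw [habs, integral_sub ((hg.indicator ht).const_mul 2) hg, integral_const_mul,
    integral_indicator ht, hzero, sub_zero]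

theorem exp_neg_sub_div_eq {r : ℝ} (hr : 0 < r) (s : ℝ) :
    (fun x => exp (-(x - s) / r)) = fun x => exp (s / r) * exp (-r⁻¹ * x) := by
  funext x; rw [← exp_add]; congr 1; field_simp; ring

theorem integrableOn_exp_neg_sub_div_Ici {r : ℝ} (hr : 0 < r) (s b : ℝ) :
    IntegrableOn (fun x => exp (-(x - s) / r)) (Ici b) := by
  rw [exp_neg_sub_div_eq hr s, integrableOn_Ici_iff_integrableOn_Ioi]
  exact (integrableOn_exp_mul_Ioi (by simpa using hr) b).const_mul _

theorem integral_exp_neg_sub_div_Ici {r : ℝ} (hr : 0 < r) (s b : ℝ) :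
    ∫ x in Ici b, exp (-(x - s) / r) = r * exp (-(b - s) / r) := by
  rw [integral_Ici_eq_integral_Ioi, exp_neg_sub_div_eq hr s, integral_const_mul,
    integral_exp_mul_Ioi (by simpa using hr) b, neg_div_neg_eq, div_inv_eq_mul,
    congr_fun (exp_neg_sub_div_eq hr s) b]
  ring

/-- `f_U - f_V` on `[s, ∞)`, for `f_U, f_V` the densities of `p X + q Y + s` and `q Y + s`. -/
noncomputable def densityDiff (p q s x : ℝ) : ℝ :=
  (p / q * exp (-(x - s) / q) - exp (-(x - s) / p)) / (q - p)

section DensityDiff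

variable {p q : ℝ}

theorem integrableOn_densityDiff_Ici (hp : 0 < p) (hpq : p < q) (s b : ℝ) :
    IntegrableOn (densityDiff p q s) (Ici b) :=
  ((((integrableOn_exp_neg_sub_div_Ici (hp.trans hpq) s b).const_mul (p / q)).sub
    (integrableOn_exp_neg_sub_div_Ici hp s b)).div_const (q - p))

theorem integral_densityDiff_Ici (hp : 0 < p) (hpq : p < q) (s b : ℝ) :
    ∫ x in Ici b, densityDiff p q s x =
      p / (q - p) * (exp (-(b - s) / q) - exp (-(b - s) / p)) := by
  have hq : 0 < q := hp.trans hpq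
  unfold densityDiff
  rw [integral_div, integral_sub ((integrableOn_exp_neg_sub_div_Ici hq s b).const_mul _)
    (integrableOn_exp_neg_sub_div_Ici hp s b), integral_const_mul,
    integral_exp_neg_sub_div_Ici hq, integral_exp_neg_sub_div_Ici hp]
  field_simp

theorem densityDiff_nonneg_iff (hp : 0 < p) (hpq : p < q) (s x : ℝ) :
    0 ≤ densityDiff p q s x ↔ s + q * p / (q - p) * log (q / p) ≤ x := by
  have hq : 0 < q := hp.trans hpq
  have hqp : 0 < q - p := sub_pos.2 hpq
  have hlog : log (p / q) = -log (q / p) := by rw [← log_inv, inv_div]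
  unfold densityDiff
  rw [le_div_iff₀ hqp, zero_mul, sub_nonneg, ← exp_log (div_pos hp hq), ← exp_add, exp_le_exp,
    hlog, ← sub_nonneg, ← le_sub_iff_add_le', div_mul_eq_mul_div, div_le_iff₀ hqp,
    show -log (q / p) + -(x - s) / q - -(x - s) / p =
      ((x - s) * (q - p) - q * p * log (q / p)) / (p * q) by field_simp; ring,
    le_div_iff₀ (mul_pos hp hq), zero_mul, sub_nonneg]

theorem integral_densityDiff_Ici_crossing (hp : 0 < p) (hpq : p < q) (s : ℝ) :
    ∫ x in Ici (s + q * p / (q - p) * log (q / p)), densityDiff p q s x =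
      (p / q) ^ (1 / (1 - p / q)) := by
  have hq : 0 < q := hp.trans hpq
  have hqp : q - p ≠ 0 := (sub_pos.2 hpq).ne'
  have hχ : 0 < p / q := div_pos hp hq
  have hlog : log (q / p) = -log (p / q) := by rw [← log_inv, inv_div]
  have hexp_q : exp (-(q * p / (q - p) * log (q / p)) / q) = (p / q) ^ (p / (q - p)) := by
    rw [rpow_def_of_pos hχ, hlog]; field_simp
  have hexp_p :
      exp (-(q * p / (q - p) * log (q / p)) / p) = (p / q) ^ (p / (q - p)) * (p / q) := by
    rw [← rpow_add_one hχ.ne', rpow_def_of_pos hχ, hlog]; congr 1; field_simp; ring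
  have hexponent : 1 / (1 - p / q) = p / (q - p) + 1 := by field_simp; ring
  rw [integral_densityDiff_Ici hp hpq, add_sub_cancel_left, hexp_q, hexp_p, hexponent,
    rpow_add_one hχ.ne']
  field_simp

end DensityDiff

theorem stmt_1_general (p q σ2 : ℝ) (hp : 0 < p) (hpq : p < q)
    (fU fV : ℝ → ℝ)
    (hfU : ∀ x, fU x =
      if σ2 ≤ x then (Real.exp (-(x - σ2) / q) - Real.exp (-(x - σ2) / p)) / (q - p) else 0)
    (hfV : ∀ x, fV x = if σ2 ≤ x then (1 / q) * Real.exp (-(x - σ2) / q) else 0)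
    (χ : ℝ) (hχ : χ = p / q) :
    (1 / 2) * (∫ x in Set.Ici σ2, |fU x - fV x|) = χ ^ (1 / (1 - χ)) ∧
    {x : ℝ | σ2 ≤ x ∧ fV x ≤ fU x} =
      Set.Ici (σ2 + q * p / (q - p) * Real.log (q / p)) := by
  have hq : 0 < q := hp.trans hpq
  set x₀ := σ2 + q * p / (q - p) * log (q / p)
  have hσx₀ : σ2 ≤ x₀ := le_add_of_nonneg_right <| mul_nonneg
    (div_nonneg (mul_pos hq hp).le (sub_pos.2 hpq).le) (log_nonneg ((one_le_div hp).2 hpq.le))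
  have hdiff : ∀ x, σ2 ≤ x → fU x - fV x = densityDiff p q σ2 x := by
    intro x hx
    rw [hfU, hfV, if_pos hx, if_pos hx, densityDiff]
    field_simp [(sub_pos.2 hpq).ne']
    ring
  constructor
  · have hzero : ∫ x in Ici σ2, densityDiff p q σ2 x = 0 := by
      simp [integral_densityDiff_Ici hp hpq]
    rw [setIntegral_congr_fun measurableSet_Ici (fun x hx => by rw [hdiff x hx]),
      integral_abs_eq_two_mul_setIntegral_of_integral_eq_zero measurableSet_Ici
        (integrableOn_densityDiff_Ici hp hpq σ2 σ2) hzero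
        (fun x hx => (densityDiff_nonneg_iff hp hpq σ2 x).2 hx)
        (fun x hx => (not_le.1 (mt (densityDiff_nonneg_iff hp hpq σ2 x).1 hx)).le),
      Measure.restrict_restrict measurableSet_Ici, Ici_inter_Ici, sup_eq_left.2 hσx₀,
      integral_densityDiff_Ici_crossing hp hpq, hχ]
    ring
  · ext x
    refine ⟨fun ⟨hx, hle⟩ => (densityDiff_nonneg_iff hp hpq σ2 x).1 ?_,
      fun hx => ⟨hσx₀.trans hx, ?_⟩⟩
    · rw [← hdiff x hx]; linarith
    · rw [← sub_nonneg, hdiff x (hσx₀.trans hx)]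
      exact (densityDiff_nonneg_iff hp hpq σ2 x).2 hx

theorem stmt_1 (p q σ2 : ℝ) (hp : 0 < p) (hpq : p < q) (hσ : 0 ≤ σ2)
    (fU fV : ℝ → ℝ)
    (hfU : ∀ x, fU x =
      if σ2 ≤ x then (Real.exp (-(x - σ2) / q) - Real.exp (-(x - σ2) / p)) / (q - p) else 0)
    (hfV : ∀ x, fV x = if σ2 ≤ x then (1 / q) * Real.exp (-(x - σ2) / q) else 0)
    (χ : ℝ) (hχ : χ = p / q) :
    (1 / 2) * (∫ x in Set.Ici σ2, |fU x - fV x|) = χ ^ (1 / (1 - χ)) ∧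
    {x : ℝ | σ2 ≤ x ∧ fV x ≤ fU x} =
      Set.Ici (σ2 + q * p / (q - p) * Real.log (q / p)) :=
  stmt_1_general p q σ2 hp hpq fU fV hfU hfV χ hχ
end

section
/- Let K ≥ 1 and for each k ∈ {1,…,K} let 0 < p̂_k < q̂_k and σ_k² ≥ 0. Define f_{U_k}(x) := (e^{−(x−σ_k²)/q̂_k} − e^{−(x−σ_k²)/p̂_k})/(q̂_k − p̂_k) and f_{V_k}(x) := (1/q̂_k) e^{−(x−σ_k²)/q̂_k} for x ≥ σ_k² (0 otherwise), and set χ_k := p̂_k/q̂_k. Then (1/2) ∫_{ℝ^K} |∏_{k=1}^K f_{U_k}(x_k) − ∏_{k=1}^K f_{V_k}(x_k)| dx ≤ Σ_{k=1}^K χ_k^{1/(1−χ_k)}. -/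
/-! The difference of the two product densities telescopes into hybrid products, the `i`-th of
which uses `f_V` in the coordinates before `i`, `|f_U - f_V|` in coordinate `i` and `f_U` after
it. Integrating a hybrid product by Fubini leaves only `∫ |f_{U_i} - f_{V_i}|`, since the other
factors are probability densities; hence the total variation of the products is at most the sum
of the one-dimensional ones.

In dimension one, `f_U - f_V` is negative up to `σ² + T` and positive afterwards, where
`T = p q log (q / p) / (q - p)`. Both densities have mass one, so
`∫ |f_U - f_V| = 2 ∫_{x > σ² + T} (f_U - f_V) = 2 e^{-T/p} = 2 χ^{1/(1-χ)}`. -/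

open MeasureTheory Real

section HybridArgument

open Finset

variable {ι : Type*} [Fintype ι] [LinearOrder ι] {E : ι → Type*}

lemma abs_prod_sub_prod_le (a b : ι → ℝ) (ha : ∀ i, 0 ≤ a i) (hb : ∀ i, 0 ≤ b i) :
    |∏ i, a i - ∏ i, b i| ≤
      ∑ i, |a i - b i| * (∏ j with j < i, b j) * ∏ j with i < j, a j := by
  -- `prod_sub_ordered` applied to `a - (a - b) = b`
  have h := prod_sub_ordered univ a fun i => a i - b i
  simp only [sub_sub_cancel] at h
  rw [h, sub_sub_cancel]
  refine (abs_sum_le_sum_abs _ _).trans_eq (sum_congr rfl fun i _ => ?_)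
  rw [abs_mul, abs_mul, abs_of_nonneg (prod_nonneg fun j _ => hb j),
    abs_of_nonneg (prod_nonneg fun j _ => ha j)]

def hybridFactor (f g : (i : ι) → E i → ℝ) (i j : ι) : E j → ℝ :=
  if j < i then g j else if i < j then f j else fun y => |f j y - g j y|

lemma prod_hybridFactor (f g : (i : ι) → E i → ℝ) (i : ι) (x : (j : ι) → E j) :
    ∏ j, hybridFactor f g i j (x j) =
      |f i (x i) - g i (x i)| * (∏ j with j < i, g j (x j)) * ∏ j with i < j, f j (x j) := by
  have hgt : univ.filter (fun j => ¬j < i ∧ i < j) = univ.filter (i < ·) :=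
    filter_congr fun j _ => and_iff_right_of_imp fun (h : i < j) => h.not_gt
  have heq : univ.filter (fun j => ¬j < i ∧ ¬i < j) = {i} := by
    ext j; simp [le_antisymm_iff, not_lt, and_comm]
  simp only [hybridFactor, ite_apply, prod_ite, filter_filter, hgt, heq, prod_singleton]
  ring

lemma integral_abs_prod_sub_prod_le [∀ i, MeasurableSpace (E i)] (μ : (i : ι) → Measure (E i))
    [∀ i, SigmaFinite (μ i)] {f g : (i : ι) → E i → ℝ}
    (hf : ∀ i y, 0 ≤ f i y) (hg : ∀ i y, 0 ≤ g i y)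
    (hfi : ∀ i, Integrable (f i) (μ i)) (hgi : ∀ i, Integrable (g i) (μ i))
    (hf1 : ∀ i, ∫ y, f i y ∂μ i = 1) (hg1 : ∀ i, ∫ y, g i y ∂μ i = 1) :
    ∫ x, |∏ i, f i (x i) - ∏ i, g i (x i)| ∂Measure.pi μ ≤
      ∑ i, ∫ y, |f i y - g i y| ∂μ i := by
  have hybrid_integrable (i : ι) :
      Integrable (fun x => ∏ j, hybridFactor f g i j (x j)) (Measure.pi μ) := by
    refine Integrable.fintype_prod_dep fun j => ?_
    unfold hybridFactor
    split_ifs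
    exacts [hgi j, hfi j, ((hfi j).sub (hgi j)).abs]
  have integral_hybrid (i j : ι) (hj : j ≠ i) : ∫ y, hybridFactor f g i j y ∂μ j = 1 := by
    unfold hybridFactor
    split_ifs with h₁ h₂
    exacts [hg1 j, hf1 j, absurd (le_antisymm (not_lt.1 h₂) (not_lt.1 h₁)) hj]
  calc ∫ x, |∏ i, f i (x i) - ∏ i, g i (x i)| ∂Measure.pi μ
      ≤ ∫ x, ∑ i, ∏ j, hybridFactor f g i j (x j) ∂Measure.pi μ := by
        refine integral_mono_of_nonneg (.of_forall fun x => abs_nonneg _)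
          (integrable_finsetSum _ fun i _ => hybrid_integrable i) (.of_forall fun x => ?_)
        simp only [prod_hybridFactor]
        exact abs_prod_sub_prod_le _ _ (fun i => hf i _) (fun i => hg i _)
    _ = ∑ i, ∫ x, ∏ j, hybridFactor f g i j (x j) ∂Measure.pi μ :=
        integral_finsetSum _ fun i _ => hybrid_integrable i
    _ = ∑ i, ∫ y, |f i y - g i y| ∂μ i := by
        refine sum_congr rfl fun i _ => ?_
        rw [integral_fintype_prod_eq_prod, ← mul_prod_erase _ _ (mem_univ i),
          prod_congr rfl fun j hj => integral_hybrid i j (ne_of_mem_erase hj)]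
        simp [hybridFactor]

end HybridArgument

open Set

lemma integral_abs_eq_two_mul_setIntegral_sub {α : Type*} [MeasurableSpace α] {μ : Measure α}
    {D : α → ℝ} {S : Set α} (hS : MeasurableSet S) (hD : Integrable D μ)
    (hpos : ∀ x ∈ S, 0 ≤ D x) (hneg : ∀ x ∉ S, D x ≤ 0) :
    ∫ x, |D x| ∂μ = 2 * ∫ x in S, D x ∂μ - ∫ x, D x ∂μ := by
  have habs_on : ∫ x in S, |D x| ∂μ = ∫ x in S, D x ∂μ :=
    setIntegral_congr_fun hS fun x hx => abs_of_nonneg (hpos x hx)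
  have habs_off : ∫ x in Sᶜ, |D x| ∂μ = -∫ x in Sᶜ, D x ∂μ := by
    rw [← integral_neg]
    exact setIntegral_congr_fun hS.compl fun x hx => abs_of_nonpos (hneg x hx)
  rw [← integral_add_compl hS hD.abs, ← integral_add_compl hS hD, habs_on, habs_off]
  ring

lemma integral_eq_setIntegral_Ioi_of_eq_zero {f : ℝ → ℝ} {s : ℝ} (hf : ∀ x < s, f x = 0) :
    ∫ x, f x = ∫ x in Ioi s, f x := by
  rw [← integral_Ici_eq_integral_Ioi,
    setIntegral_eq_integral_of_forall_compl_eq_zero (s := Ici s) fun x hx => hf x (not_le.1 hx)]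

lemma integrable_ite_le {g : ℝ → ℝ} {s : ℝ} (hg : IntegrableOn g (Ioi s)) :
    Integrable fun x => if s ≤ x then g x else 0 :=
  (integrable_indicator_iff measurableSet_Ici).2
    ((integrableOn_Ici_iff_integrableOn_Ioi (f := g)).2 hg)

lemma exp_neg_sub_div (x s b : ℝ) : exp (-(x - s) / b) = exp (s / b) * exp (-b⁻¹ * x) := by
  rw [← exp_add]
  ring_nf

lemma integrableOn_exp_neg_sub_div_Ioi {b : ℝ} (hb : 0 < b) (s c : ℝ) :
    IntegrableOn (fun x => exp (-(x - s) / b)) (Ioi c) := by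
  simp_rw [exp_neg_sub_div _ s b]
  exact (integrableOn_exp_mul_Ioi (by simpa using hb) c).const_mul _

lemma integral_exp_neg_sub_div_Ioi {b : ℝ} (hb : 0 < b) (s c : ℝ) :
    ∫ x in Ioi c, exp (-(x - s) / b) = b * exp (-(c - s) / b) := by
  simp_rw [exp_neg_sub_div _ s b]
  rw [integral_const_mul, integral_exp_mul_Ioi (by simpa using hb)]
  field_simp

noncomputable def hypoexpPDF (p q s x : ℝ) : ℝ :=
  if s ≤ x then (exp (-(x - s) / q) - exp (-(x - s) / p)) / (q - p) else 0

noncomputable def shiftedExpPDF (q s x : ℝ) : ℝ :=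
  if s ≤ x then 1 / q * exp (-(x - s) / q) else 0

section ShiftedExp

variable {q : ℝ} (s : ℝ)

lemma shiftedExpPDF_nonneg (hq : 0 < q) (x : ℝ) : 0 ≤ shiftedExpPDF q s x := by
  unfold shiftedExpPDF
  split_ifs
  exacts [mul_nonneg (one_div_nonneg.2 hq.le) (exp_pos _).le, le_rfl]

lemma integrable_shiftedExpPDF (hq : 0 < q) : Integrable (shiftedExpPDF q s) :=
  integrable_ite_le ((integrableOn_exp_neg_sub_div_Ioi hq s s).const_mul _)

lemma setIntegral_Ioi_shiftedExpPDF (hq : 0 < q) {c : ℝ} (hc : s ≤ c) :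
    ∫ x in Ioi c, shiftedExpPDF q s x = exp (-(c - s) / q) := by
  unfold shiftedExpPDF
  rw [setIntegral_congr_fun measurableSet_Ioi fun x hx => if_pos (hc.trans (le_of_lt hx)),
    integral_const_mul, integral_exp_neg_sub_div_Ioi hq]
  field_simp

lemma integral_shiftedExpPDF (hq : 0 < q) : ∫ x, shiftedExpPDF q s x = 1 := by
  rw [integral_eq_setIntegral_Ioi_of_eq_zero (f := shiftedExpPDF q s)
      fun x hx => if_neg hx.not_ge,
    setIntegral_Ioi_shiftedExpPDF s hq le_rfl]
  simp

end ShiftedExp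

section Hypoexp

variable {p q : ℝ} (s : ℝ)

lemma hypoexpPDF_nonneg (hp : 0 < p) (hpq : p < q) (x : ℝ) : 0 ≤ hypoexpPDF p q s x := by
  unfold hypoexpPDF
  split_ifs with hx
  · refine div_nonneg (sub_nonneg.2 (exp_le_exp.2 ?_)) (sub_pos.2 hpq).le
    rw [neg_div, neg_div, neg_le_neg_iff]
    exact div_le_div_of_nonneg_left (sub_nonneg.2 hx) hp hpq.le
  · rfl

lemma integrable_hypoexpPDF (hp : 0 < p) (hpq : p < q) : Integrable (hypoexpPDF p q s) :=
  integrable_ite_le (((integrableOn_exp_neg_sub_div_Ioi (hp.trans hpq) s s).sub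
    (integrableOn_exp_neg_sub_div_Ioi hp s s)).div_const _)

lemma setIntegral_Ioi_hypoexpPDF (hp : 0 < p) (hpq : p < q) {c : ℝ} (hc : s ≤ c) :
    ∫ x in Ioi c, hypoexpPDF p q s x =
      (q * exp (-(c - s) / q) - p * exp (-(c - s) / p)) / (q - p) := by
  unfold hypoexpPDF
  rw [setIntegral_congr_fun measurableSet_Ioi fun x hx => if_pos (hc.trans (le_of_lt hx)),
    integral_div, integral_sub (integrableOn_exp_neg_sub_div_Ioi (hp.trans hpq) s c)
      (integrableOn_exp_neg_sub_div_Ioi hp s c),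
    integral_exp_neg_sub_div_Ioi (hp.trans hpq), integral_exp_neg_sub_div_Ioi hp]

lemma integral_hypoexpPDF (hp : 0 < p) (hpq : p < q) : ∫ x, hypoexpPDF p q s x = 1 := by
  rw [integral_eq_setIntegral_Ioi_of_eq_zero (f := hypoexpPDF p q s)
      fun x hx => if_neg hx.not_ge,
    setIntegral_Ioi_hypoexpPDF s hp hpq le_rfl]
  simp [div_self (sub_pos.2 hpq).ne']

end Hypoexp

/-- `f_U (s + t) = f_V (s + t)` exactly at `t = densityCrossing p q`. -/
noncomputable def densityCrossing (p q : ℝ) : ℝ :=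
  p * q * log (q / p) / (q - p)

section Crossing

variable {p q : ℝ}

lemma densityCrossing_pos (hp : 0 < p) (hpq : p < q) : 0 < densityCrossing p q := by
  have hq : 0 < q := hp.trans hpq
  exact div_pos (mul_pos (mul_pos hp hq) (log_pos ((one_lt_div hp).2 hpq))) (sub_pos.2 hpq)

lemma mul_exp_neg_div_eq (hp : 0 < p) (hpq : p < q) (t : ℝ) :
    p * exp (-t / q) =
      q * exp (-t / p) * exp ((t - densityCrossing p q) * ((q - p) / (p * q))) := by
  have hq : 0 < q := hp.trans hpq
  have hqp : q - p ≠ 0 := (sub_pos.2 hpq).ne'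
  calc p * exp (-t / q) = exp (log p + -t / q) := by rw [exp_add, exp_log hp]
    _ = exp (log q + (-t / p + (t - densityCrossing p q) * ((q - p) / (p * q)))) := by
      congr 1
      rw [densityCrossing, log_div hq.ne' hp.ne']
      field_simp
      ring
    _ = _ := by rw [exp_add, exp_add, exp_log hq, mul_assoc]

lemma rpow_one_div_one_sub_eq (hp : 0 < p) (hpq : p < q) :
    (p / q) ^ (1 / (1 - p / q)) = exp (-densityCrossing p q / p) := by
  have hq : 0 < q := hp.trans hpq
  rw [rpow_def_of_pos (div_pos hp hq), densityCrossing, log_div hq.ne' hp.ne',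
    log_div hp.ne' hq.ne']
  congr 1
  field_simp
  ring

end Crossing

lemma hypoexpPDF_sub_shiftedExpPDF_of_le {p q s x : ℝ} (hp : 0 < p) (hpq : p < q) (hx : s ≤ x) :
    hypoexpPDF p q s x - shiftedExpPDF q s x =
      exp (-(x - s) / p) * (exp ((x - s - densityCrossing p q) * ((q - p) / (p * q))) - 1) /
        (q - p) := by
  have hq : 0 < q := hp.trans hpq
  have hqp : q - p ≠ 0 := (sub_pos.2 hpq).ne'
  have key := mul_exp_neg_div_eq hp hpq (x - s)
  rw [hypoexpPDF, shiftedExpPDF, if_pos hx, if_pos hx]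
  generalize exp (-(x - s) / q) = a, exp (-(x - s) / p) = b,
    exp ((x - s - densityCrossing p q) * ((q - p) / (p * q))) = e at key ⊢
  field_simp
  linear_combination key

lemma integral_abs_hypoexpPDF_sub_shiftedExpPDF {p q : ℝ} (hp : 0 < p) (hpq : p < q) (s : ℝ) :
    ∫ x, |hypoexpPDF p q s x - shiftedExpPDF q s x| = 2 * (p / q) ^ (1 / (1 - p / q)) := by
  have hq : 0 < q := hp.trans hpq
  have hqp : q - p ≠ 0 := (sub_pos.2 hpq).ne'
  set T := densityCrossing p q
  have hcoef : 0 < (q - p) / (p * q) := div_pos (sub_pos.2 hpq) (mul_pos hp hq)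
  have hT : 0 ≤ T := (densityCrossing_pos hp hpq).le
  have hpos : ∀ x ∈ Ioi (s + T), 0 ≤ hypoexpPDF p q s x - shiftedExpPDF q s x := by
    intro x hx
    rw [mem_Ioi] at hx
    rw [hypoexpPDF_sub_shiftedExpPDF_of_le hp hpq (by linarith)]
    refine div_nonneg (mul_nonneg (exp_pos _).le (sub_nonneg.2 (one_le_exp ?_)))
      (sub_pos.2 hpq).le
    exact mul_nonneg (by linarith) hcoef.le
  have hneg : ∀ x ∉ Ioi (s + T), hypoexpPDF p q s x - shiftedExpPDF q s x ≤ 0 := by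
    intro x hx
    rw [mem_Ioi, not_lt] at hx
    by_cases hsx : s ≤ x
    · rw [hypoexpPDF_sub_shiftedExpPDF_of_le hp hpq hsx]
      refine div_nonpos_of_nonpos_of_nonneg (mul_nonpos_of_nonneg_of_nonpos (exp_pos _).le
        (sub_nonpos.2 (exp_le_one_iff.2 ?_))) (sub_pos.2 hpq).le
      exact mul_nonpos_of_nonpos_of_nonneg (by linarith) hcoef.le
    · simp [hypoexpPDF, shiftedExpPDF, hsx]
  have hU := integrable_hypoexpPDF s hp hpq
  have hV := integrable_shiftedExpPDF s hq
  rw [integral_abs_eq_two_mul_setIntegral_sub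
      (D := fun x => hypoexpPDF p q s x - shiftedExpPDF q s x) measurableSet_Ioi (hU.sub hV) hpos hneg,
    integral_sub hU hV, integral_hypoexpPDF s hp hpq, integral_shiftedExpPDF s hq,
    integral_sub hU.integrableOn hV.integrableOn,
    setIntegral_Ioi_hypoexpPDF s hp hpq (by linarith),
    setIntegral_Ioi_shiftedExpPDF s hq (by linarith),
    rpow_one_div_one_sub_eq hp hpq, add_sub_cancel_left]
  have key := mul_exp_neg_div_eq hp hpq T
  rw [sub_self, zero_mul, exp_zero, mul_one] at key
  generalize exp (-T / q) = a, exp (-T / p) = b at key ⊢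
  field_simp
  linear_combination 2 * key

theorem stmt_3_general (K : ℕ) (p q σ2 : Fin K → ℝ)
    (hp : ∀ k, 0 < p k) (hpq : ∀ k, p k < q k)
    (fU fV : Fin K → ℝ → ℝ)
    (hfU : ∀ k x, fU k x =
      if σ2 k ≤ x then
        (Real.exp (-(x - σ2 k) / q k) - Real.exp (-(x - σ2 k) / p k)) / (q k - p k)
      else 0)
    (hfV : ∀ k x, fV k x =
      if σ2 k ≤ x then (1 / q k) * Real.exp (-(x - σ2 k) / q k) else 0)
    (χ : Fin K → ℝ) (hχ : ∀ k, χ k = p k / q k) :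
    (1 / 2) * (∫ x : Fin K → ℝ, |(∏ k, fU k (x k)) - ∏ k, fV k (x k)|) ≤
      ∑ k, χ k ^ (1 / (1 - χ k)) := by
  have hq k : 0 < q k := (hp k).trans (hpq k)
  obtain rfl : fU = fun k => hypoexpPDF (p k) (q k) (σ2 k) := funext fun k => funext (hfU k)
  obtain rfl : fV = fun k => shiftedExpPDF (q k) (σ2 k) := funext fun k => funext (hfV k)
  have hTV := integral_abs_prod_sub_prod_le (fun _ => volume)
    (fun k => hypoexpPDF_nonneg (σ2 k) (hp k) (hpq k))
    (fun k => shiftedExpPDF_nonneg (σ2 k) (hq k))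
    (fun k => integrable_hypoexpPDF (σ2 k) (hp k) (hpq k))
    (fun k => integrable_shiftedExpPDF (σ2 k) (hq k))
    (fun k => integral_hypoexpPDF (σ2 k) (hp k) (hpq k))
    (fun k => integral_shiftedExpPDF (σ2 k) (hq k))
  simp only [integral_abs_hypoexpPDF_sub_shiftedExpPDF (hp _) (hpq _), ← hχ,
    ← Finset.mul_sum] at hTV
  rw [volume_pi]
  linarith

theorem stmt_3 (K : ℕ) (hK : 1 ≤ K) (p q σ2 : Fin K → ℝ)
    (hp : ∀ k, 0 < p k) (hpq : ∀ k, p k < q k) (hσ : ∀ k, 0 ≤ σ2 k)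
    (fU fV : Fin K → ℝ → ℝ)
    (hfU : ∀ k x, fU k x =
      if σ2 k ≤ x then
        (Real.exp (-(x - σ2 k) / q k) - Real.exp (-(x - σ2 k) / p k)) / (q k - p k)
      else 0)
    (hfV : ∀ k x, fV k x =
      if σ2 k ≤ x then (1 / q k) * Real.exp (-(x - σ2 k) / q k) else 0)
    (χ : Fin K → ℝ) (hχ : ∀ k, χ k = p k / q k) :
    (1 / 2) * (∫ x : Fin K → ℝ, |(∏ k, fU k (x k)) - ∏ k, fV k (x k)|) ≤
      ∑ k, χ k ^ (1 / (1 - χ k)) :=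
  stmt_3_general K p q σ2 hp hpq fU fV hfU hfV χ hχ
end

section
/- Define η(x) := x^{1/(1−x)} for x ∈ (0,1). Then η is twice differentiable on (0,1) with η″(x) ≤ 0 for all x ∈ (0,1), and η is strictly monotonically increasing on (0,1). Consequently η is a monotonically increasing concave function on (0,1). -/
/-!
Write `η = exp ∘ g` with `g x = log x / (1 - x)`, so that `η'' = η (g'² + g'')`. Clearing the
denominator `x² (1 - x)⁴`, the sign of `g'² + g''` is that of
`(1 - x² + x log x)² - (1 - x)² (x² - x + 1)`. The base `1 - x² + x log x` is positive by
`log x > 1 - 1/x`, and the Padé bound `log x ≤ 2 (x - 1) / (x + 1)` caps it by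
`(1 - x)(1 + x²) / (1 + x)`; what is left is `(1 + x²)² ≤ (1 + x)² (x² - x + 1)`, whose gap is
`x (1 - x)²`. The same lower bound on `log` makes `g' > 0`, hence `η' > 0`.
-/

open Real Set

lemma log_le_two_mul_sub_one_div_add_one {x : ℝ} (hx₀ : 0 < x) (hx₁ : x ≤ 1) :
    log x ≤ 2 * (x - 1) / (x + 1) := by
  -- `y ≤ artanh y` at `y = (1 - x) / (1 + x)`, where `(1 + y) / (1 - y) = 1 / x`
  have h := sum_range_le_log_div (x := (1 - x) / (1 + x)) (by bound)
    (by rw [div_lt_one (by positivity)]; linarith) 1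
  have hy : (1 + (1 - x) / (1 + x)) / (1 - (1 - x) / (1 + x)) = x⁻¹ := by
    field_simp
    ring_nf
    field_simp
  rw [hy, log_inv] at h
  simp only [Finset.range_one, Finset.sum_singleton] at h
  convert (by linarith : log x ≤ -2 * ((1 - x) / (1 + x))) using 1
  field_simp
  ring

lemma one_sub_add_mul_log_pos {x : ℝ} (hx₀ : 0 < x) (hx₁ : x ≠ 1) :
    0 < 1 - x + x * log x := by
  have h := log_lt_sub_one_of_pos (inv_pos.mpr hx₀) (inv_ne_one.mpr hx₁)
  rw [log_inv] at h
  have := mul_lt_mul_of_pos_left h hx₀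
  field_simp at this
  linarith

lemma sq_one_sub_sq_add_mul_log_le {x : ℝ} (hx₀ : 0 < x) (hx₁ : x < 1) :
    (1 - x ^ 2 + x * log x) ^ 2 ≤ (1 - x) ^ 2 * (x ^ 2 - x + 1) := by
  have hpos : 0 ≤ 1 - x ^ 2 + x * log x := by
    nlinarith [one_sub_add_mul_log_pos hx₀ hx₁.ne]
  have hle : (1 + x) * (1 - x ^ 2 + x * log x) ≤ (1 - x) * (1 + x ^ 2) := by
    have h := mul_le_mul_of_nonneg_left (log_le_two_mul_sub_one_div_add_one hx₀ hx₁.le) hx₀.le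
    rw [mul_div_assoc', le_div_iff₀ (by positivity)] at h
    nlinarith
  have hpoly : (1 + x ^ 2) ^ 2 ≤ (1 + x) ^ 2 * (x ^ 2 - x + 1) := by
    nlinarith [mul_nonneg hx₀.le (sq_nonneg (1 - x))]
  refine le_of_mul_le_mul_left ?_ (by positivity : 0 < (1 + x) ^ 2)
  calc (1 + x) ^ 2 * (1 - x ^ 2 + x * log x) ^ 2
      = ((1 + x) * (1 - x ^ 2 + x * log x)) ^ 2 := by ring
    _ ≤ ((1 - x) * (1 + x ^ 2)) ^ 2 := pow_le_pow_left₀ (by positivity) hle 2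
    _ = (1 - x) ^ 2 * (1 + x ^ 2) ^ 2 := by ring
    _ ≤ (1 - x) ^ 2 * ((1 + x) ^ 2 * (x ^ 2 - x + 1)) := by gcongr
    _ = (1 + x) ^ 2 * ((1 - x) ^ 2 * (x ^ 2 - x + 1)) := by ring

lemma hasDerivAt_log_div_one_sub {x : ℝ} (hx₀ : 0 < x) (hx₁ : x ≠ 1) :
    HasDerivAt (fun y => log y / (1 - y)) ((1 - x + x * log x) / (x * (1 - x) ^ 2)) x := by
  have h1x : 1 - x ≠ 0 := sub_ne_zero.2 hx₁.symm
  have hsub : HasDerivAt (fun y : ℝ => 1 - y) (-1) x := (hasDerivAt_id' x).const_sub 1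
  refine ((hasDerivAt_log hx₀.ne').fun_div hsub h1x).congr_deriv ?_
  field_simp
  ring

lemma hasDerivAt_one_sub_add_mul_log_div {x : ℝ} (hx₀ : 0 < x) (hx₁ : x ≠ 1) :
    HasDerivAt (fun y => (1 - y + y * log y) / (y * (1 - y) ^ 2))
      ((2 * x ^ 2 * log x - (1 - x) * (1 - 3 * x)) / (x ^ 2 * (1 - x) ^ 3)) x := by
  have h1x : 1 - x ≠ 0 := sub_ne_zero.2 hx₁.symm
  have hid : HasDerivAt (fun y : ℝ => y) 1 x := hasDerivAt_id' x
  have hsub : HasDerivAt (fun y : ℝ => 1 - y) (-1) x := hid.const_sub 1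
  have hnum : HasDerivAt (fun y => 1 - y + y * log y) (log x) x := by
    refine (hsub.fun_add (hid.fun_mul (hasDerivAt_log hx₀.ne'))).congr_deriv ?_
    field_simp
    ring
  have hden := hid.fun_mul (hsub.fun_pow 2)
  refine (hnum.fun_div hden (by simp [hx₀.ne', h1x])).congr_deriv ?_
  field_simp
  ring

noncomputable def penalty (x : ℝ) : ℝ := x ^ (1 / (1 - x))

lemma penalty_pos {x : ℝ} (hx : 0 < x) : 0 < penalty x := rpow_pos_of_pos hx _

lemma penalty_eq_exp {x : ℝ} (hx : 0 < x) : penalty x = exp (log x / (1 - x)) := by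
  rw [penalty, rpow_def_of_pos hx, mul_one_div]

lemma hasDerivAt_penalty {x : ℝ} (hx₀ : 0 < x) (hx₁ : x ≠ 1) :
    HasDerivAt penalty (penalty x * ((1 - x + x * log x) / (x * (1 - x) ^ 2))) x := by
  rw [penalty_eq_exp hx₀]
  refine (hasDerivAt_log_div_one_sub hx₀ hx₁).exp.congr_of_eventuallyEq ?_
  filter_upwards [eventually_gt_nhds hx₀] with y hy using penalty_eq_exp hy

lemma hasDerivAt_deriv_penalty {x : ℝ} (hx₀ : 0 < x) (hx₁ : x ≠ 1) :
    HasDerivAt (deriv penalty) (penalty x *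
      (((1 - x ^ 2 + x * log x) ^ 2 - (1 - x) ^ 2 * (x ^ 2 - x + 1)) /
        (x ^ 2 * (1 - x) ^ 4))) x := by
  have h := (hasDerivAt_penalty hx₀ hx₁).fun_mul (hasDerivAt_one_sub_add_mul_log_div hx₀ hx₁)
  refine (h.congr_deriv ?_).congr_of_eventuallyEq ?_
  · field_simp
    ring
  · filter_upwards [eventually_gt_nhds hx₀, eventually_ne_nhds hx₁] with y hy₀ hy₁
      using (hasDerivAt_penalty hy₀ hy₁).deriv

lemma deriv_penalty_pos {x : ℝ} (hx₀ : 0 < x) (hx₁ : x ≠ 1) : 0 < deriv penalty x := by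
  rw [(hasDerivAt_penalty hx₀ hx₁).deriv]
  have hnum := one_sub_add_mul_log_pos hx₀ hx₁
  have hpen := penalty_pos hx₀
  positivity

lemma deriv_deriv_penalty_nonpos {x : ℝ} (hx₀ : 0 < x) (hx₁ : x < 1) :
    deriv (deriv penalty) x ≤ 0 := by
  rw [(hasDerivAt_deriv_penalty hx₀ hx₁.ne).deriv]
  refine mul_nonpos_of_nonneg_of_nonpos (penalty_pos hx₀).le (div_nonpos_of_nonpos_of_nonneg ?_ ?_)
  · exact sub_nonpos.2 (sq_one_sub_sq_add_mul_log_le hx₀ hx₁)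
  · positivity

theorem stmt_5 (η : ℝ → ℝ) (hη : ∀ x : ℝ, η x = x ^ (1 / (1 - x))) :
    (∀ x ∈ Set.Ioo (0 : ℝ) 1,
      DifferentiableAt ℝ η x ∧ DifferentiableAt ℝ (deriv η) x ∧
        deriv (deriv η) x ≤ 0) ∧
    StrictMonoOn η (Set.Ioo (0 : ℝ) 1) ∧
    ConcaveOn ℝ (Set.Ioo (0 : ℝ) 1) η := by
  obtain rfl : η = penalty := funext hη
  have hd₁ : DifferentiableOn ℝ penalty (Ioo 0 1) := fun x hx =>
    (hasDerivAt_penalty hx.1 hx.2.ne).differentiableAt.differentiableWithinAt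
  have hd₂ : DifferentiableOn ℝ (deriv penalty) (Ioo 0 1) := fun x hx =>
    (hasDerivAt_deriv_penalty hx.1 hx.2.ne).differentiableAt.differentiableWithinAt
  refine ⟨fun x hx => ⟨(hasDerivAt_penalty hx.1 hx.2.ne).differentiableAt,
    (hasDerivAt_deriv_penalty hx.1 hx.2.ne).differentiableAt,
    deriv_deriv_penalty_nonpos hx.1 hx.2⟩, ?_, ?_⟩
  · refine strictMonoOn_of_deriv_pos (convex_Ioo 0 1) hd₁.continuousOn fun x hx => ?_
    rw [interior_Ioo] at hx
    exact deriv_penalty_pos hx.1 hx.2.ne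
  · exact concaveOn_of_deriv2_nonpos' (convex_Ioo 0 1) hd₁ hd₂ fun x hx =>
      deriv_deriv_penalty_nonpos hx.1 hx.2
end

section
/- Fix constants A > 0, χ > 0 and B > 1, and define Ξ(κ) := e^{Aχκ} − ABχκ(1+κ) ln(1 + 1/κ) for κ > 0. Then the equation Ξ(κ) = B has a unique solution κ* in (0,∞); this solution satisfies κ* ≥ ln(B)/(Aχ); and γ* := 1/κ* is the unique maximizer over γ ∈ (0, Aχ/ln(B)] of the effective-rate function R(γ) := (1 − B e^{−Aχ/γ}) ln(1 + γ). -/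
open Real Set Filter Topology

/-!
With `κ = 1/γ` and `c = Aχ` the rate becomes `(1 - B e^{-cκ}) log (1 + 1/κ)`, whose derivative is
`(B - Ξ κ) / (κ (κ + 1) e^{cκ})`, so everything hinges on how `Ξ` crosses the level `B`.
For `cκ ≤ log B` we have `e^{cκ} ≤ B`, hence `Ξ κ < B`. On `(0, ∞)` the function `Ξ` is convex:
its derivative is `c e^{cκ} + cB - cB (1 + 2κ) log (1 + 1/κ)`, and `(1 + 2κ) log (1 + 1/κ)` is
antitone because `log x ≤ sinh (log x) = (x - x⁻¹)/2` for `x ≥ 1`. Being convex, below `B` at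
`log B / c` and unbounded, `Ξ` crosses `B` exactly once, from below, so the rate increases in `κ`
up to the crossing and decreases after it.
-/

lemma Real.log_le_half_sub_inv {x : ℝ} (hx : 1 ≤ x) : log x ≤ (x - x⁻¹) / 2 := by
  rw [← sinh_log (by linarith)]
  exact self_le_sinh_iff.2 (log_nonneg hx)

lemma hasDerivAt_log_one_add_one_div {κ : ℝ} (hκ : κ ≠ 0) (hκ' : κ + 1 ≠ 0) :
    HasDerivAt (fun x => log (1 + 1 / x)) (-(κ * (κ + 1))⁻¹) κ := by
  have hne : 1 + 1 / κ ≠ 0 := by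
    rw [one_add_div hκ]; exact div_ne_zero hκ' hκ
  convert ((hasDerivAt_inv hκ).const_add 1).log (by simpa using hne) using 1
  · simp
  · field_simp

lemma hasDerivAt_one_add_two_mul_mul_log_one_add_one_div {κ : ℝ} (hκ : 0 < κ) :
    HasDerivAt (fun x => (1 + 2 * x) * log (1 + 1 / x))
      (2 * log (1 + 1 / κ) - (1 + 2 * κ) * (κ * (κ + 1))⁻¹) κ := by
  have hlin : HasDerivAt (fun x : ℝ => 1 + 2 * x) 2 κ := by
    simpa using ((hasDerivAt_id κ).const_mul 2).const_add 1
  exact (hlin.mul (hasDerivAt_log_one_add_one_div hκ.ne' (by positivity))).congr_deriv (by ring)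

lemma antitoneOn_one_add_two_mul_mul_log_one_add_one_div :
    AntitoneOn (fun κ : ℝ => (1 + 2 * κ) * log (1 + 1 / κ)) (Ioi 0) := by
  have hderiv := fun κ (hκ : κ ∈ Ioi (0 : ℝ)) =>
    hasDerivAt_one_add_two_mul_mul_log_one_add_one_div hκ
  refine antitoneOn_of_deriv_nonpos (convex_Ioi 0) (HasDerivAt.continuousOn hderiv)
    ?_ ?_ <;> rw [interior_Ioi]
  · exact fun κ hκ => (hderiv κ hκ).differentiableAt.differentiableWithinAt
  intro κ (hκ : 0 < κ)
  rw [(hderiv κ hκ).deriv]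
  have hlog := log_le_half_sub_inv (x := 1 + 1 / κ) (by simp [hκ.le])
  have : (1 + 1 / κ - (1 + 1 / κ)⁻¹) / 2 = (1 + 2 * κ) * (κ * (κ + 1))⁻¹ / 2 := by
    field_simp
    ring
  linarith

lemma ConvexOn.exists_crossing_of_tendsto_atTop {f : ℝ → ℝ} {a y : ℝ}
    (hf : ConvexOn ℝ (Ici a) f) (hcont : ContinuousOn f (Ici a)) (hfa : f a < y)
    (htop : Tendsto f atTop atTop) :
    ∃ s, a < s ∧ f s = y ∧ (∀ x ∈ Ico a s, f x < y) ∧ ∀ x ∈ Ioi s, y < f x := by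
  obtain ⟨b, hyb, hab⟩ := ((htop.eventually_gt_atTop y).and (eventually_gt_atTop a)).exists
  obtain ⟨s, hs, hfs⟩ :=
    intermediate_value_Icc hab.le (hcont.mono Icc_subset_Ici_self) ⟨hfa.le, hyb.le⟩
  have has : a < s := hs.1.lt_of_ne (by rintro rfl; exact hfa.ne hfs)
  refine ⟨s, has, hfs, fun x hx => ?_, fun x (hsx : s < x) => ?_⟩
  · rcases hx.1.eq_or_lt with rfl | hax
    · exact hfa
    by_contra! hyx
    have := hf.lt_right_of_left_lt self_mem_Ici (mem_Ici.2 has.le)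
      (by rw [openSegment_eq_Ioo has]; exact ⟨hax, hx.2⟩) (hfa.trans_le hyx)
    linarith
  · rw [← hfs] at hfa ⊢
    exact hf.lt_right_of_left_lt self_mem_Ici (mem_Ici.2 (has.trans hsx).le)
      (by rw [openSegment_eq_Ioo (has.trans hsx)]; exact ⟨has, hsx⟩) hfa

lemma apply_lt_apply_of_hasDerivAt_pos_of_neg {f f' : ℝ → ℝ} {a s x : ℝ} (hs : a < s)
    (hf : ∀ y ∈ Ioi a, HasDerivAt f (f' y) y) (hpos : ∀ y ∈ Ioo a s, 0 < f' y)
    (hneg : ∀ y ∈ Ioi s, f' y < 0) (hx : x ∈ Ioi a) (hxs : x ≠ s) : f x < f s := by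
  have hcont := HasDerivAt.continuousOn hf
  rcases hxs.lt_or_gt with h | h
  · refine strictMonoOn_of_hasDerivWithinAt_pos (f' := f') (convex_Icc x s)
      (hcont.mono fun y hy => lt_of_lt_of_le hx hy.1) (fun y hy => ?_) (fun y hy => ?_)
      (left_mem_Icc.2 h.le) (right_mem_Icc.2 h.le) h <;> rw [interior_Icc] at hy
    · exact (hf y (lt_trans hx hy.1)).hasDerivWithinAt
    · exact hpos y ⟨lt_trans hx hy.1, hy.2⟩
  · refine strictAntiOn_of_hasDerivWithinAt_neg (f' := f') (convex_Icc s x)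
      (hcont.mono fun y hy => lt_of_lt_of_le hs hy.1) (fun y hy => ?_)
      (fun y hy => ?_) (left_mem_Icc.2 h.le) (right_mem_Icc.2 h.le) h <;> rw [interior_Icc] at hy
    · exact (hf y (lt_trans hs hy.1)).hasDerivWithinAt
    · exact hneg y hy.1

/-- With `c = Aχ`, `xi c B` is the paper's `Ξ` and `effRate c B κ = R (1/κ)`. -/
noncomputable def xi (c B κ : ℝ) : ℝ :=
  exp (c * κ) - c * B * κ * (1 + κ) * log (1 + 1 / κ)

noncomputable def effRate (c B κ : ℝ) : ℝ :=
  (1 - B * exp (-(c * κ))) * log (1 + 1 / κ)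

lemma hasDerivAt_xi (c B : ℝ) {κ : ℝ} (hκ : 0 < κ) :
    HasDerivAt (xi c B)
      (c * exp (c * κ) + c * B - c * B * ((1 + 2 * κ) * log (1 + 1 / κ))) κ := by
  have hexp : HasDerivAt (fun x => exp (c * x)) (exp (c * κ) * c) κ := by
    simpa using ((hasDerivAt_id κ).const_mul c).exp
  have hquad : HasDerivAt (fun x : ℝ => c * B * x * (1 + x)) (c * B * (1 + 2 * κ)) κ := by
    have := ((hasDerivAt_id κ).const_mul (c * B)).mul ((hasDerivAt_id κ).const_add 1)
    simp only [id] at this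
    exact this.congr_deriv (by ring)
  have hprod := hquad.mul (hasDerivAt_log_one_add_one_div hκ.ne' (by positivity))
  refine (hexp.sub hprod).congr_deriv ?_
  field_simp
  ring

lemma continuousOn_xi (c B : ℝ) : ContinuousOn (xi c B) (Ioi 0) :=
  HasDerivAt.continuousOn fun _ hκ => hasDerivAt_xi c B hκ

lemma convexOn_xi {c B : ℝ} (hc : 0 ≤ c) (hB : 0 ≤ B) : ConvexOn ℝ (Ioi 0) (xi c B) := by
  refine MonotoneOn.convexOn_of_deriv (convex_Ioi 0) (continuousOn_xi c B) ?_ ?_ <;>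
    rw [interior_Ioi]
  · exact fun κ hκ => (hasDerivAt_xi c B hκ).differentiableAt.differentiableWithinAt
  intro x (hx : 0 < x) y (hy : 0 < y) hxy
  rw [(hasDerivAt_xi c B hx).deriv, (hasDerivAt_xi c B hy).deriv]
  have hexp : c * exp (c * x) ≤ c * exp (c * y) := by gcongr
  have hlog := antitoneOn_one_add_two_mul_mul_log_one_add_one_div hx hy hxy
  have := mul_le_mul_of_nonneg_left hlog (mul_nonneg hc hB)
  simp only at this
  linarith

lemma xi_lt_of_mul_le_log {c B : ℝ} (hc : 0 < c) (hB : 0 < B) {κ : ℝ} (hκ : 0 < κ)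
    (hcκ : c * κ ≤ log B) : xi c B κ < B := by
  have hexp : exp (c * κ) ≤ B := by
    simpa [exp_log hB] using exp_le_exp.2 hcκ
  have hlog : 0 < log (1 + 1 / κ) := log_pos (by simp [hκ])
  have : 0 < c * B * κ * (1 + κ) * log (1 + 1 / κ) := by positivity
  rw [xi]
  linarith

lemma tendsto_xi_atTop {c B : ℝ} (hc : 0 < c) (hB : 0 ≤ B) : Tendsto (xi c B) atTop atTop := by
  have hexp : Tendsto (fun κ => exp (c * κ) / κ) atTop atTop := by
    simpa using tendsto_exp_mul_div_rpow_atTop 1 c hc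
  have hlower : Tendsto (fun κ => κ * (exp (c * κ) / κ - c * B) - c * B) atTop atTop :=
    (tendsto_id.atTop_mul_atTop₀ (tendsto_atTop_add_const_right _ _ hexp)).atTop_add
      tendsto_const_nhds
  refine tendsto_atTop_mono' _ ?_ hlower
  filter_upwards [eventually_gt_atTop 0] with κ hκ
  have hlog : log (1 + 1 / κ) ≤ 1 / κ := by
    linarith [log_le_sub_one_of_pos (x := 1 + 1 / κ) (by positivity)]
  have : c * B * κ * (1 + κ) * log (1 + 1 / κ) ≤ c * B * (1 + κ) := by
    calc _ ≤ c * B * κ * (1 + κ) * (1 / κ) := by gcongr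
      _ = c * B * (1 + κ) := by field_simp
  have hsimp : κ * (exp (c * κ) / κ - c * B) - c * B = exp (c * κ) - c * B * (1 + κ) := by
    field_simp
    ring
  rw [hsimp, xi]
  linarith

lemma exists_xi_eq {c B : ℝ} (hc : 0 < c) (hB : 1 < B) :
    ∃ κs, log B / c < κs ∧ xi c B κs = B ∧ (∀ κ ∈ Ioo 0 κs, xi c B κ < B) ∧
      ∀ κ ∈ Ioi κs, B < xi c B κ := by
  have hκ₀ : 0 < log B / c := div_pos (log_pos hB) hc
  have hcκ₀ : c * (log B / c) = log B := mul_div_cancel₀ _ hc.ne'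
  obtain ⟨κs, hκs, hroot, hbelow, habove⟩ := ConvexOn.exists_crossing_of_tendsto_atTop
    ((convexOn_xi hc.le (by linarith)).subset (Ici_subset_Ioi.2 hκ₀) (convex_Ici _))
    ((continuousOn_xi c B).mono (Ici_subset_Ioi.2 hκ₀))
    (xi_lt_of_mul_le_log hc (by linarith) hκ₀ hcκ₀.le) (tendsto_xi_atTop hc (by linarith))
  refine ⟨κs, hκs, hroot, fun κ hκ => ?_, habove⟩
  rcases le_or_gt κ (log B / c) with h | h
  · exact xi_lt_of_mul_le_log hc (by linarith) hκ.1 (hcκ₀ ▸ mul_le_mul_of_nonneg_left h hc.le)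
  · exact hbelow κ ⟨h.le, hκ.2⟩

lemma hasDerivAt_effRate (c B : ℝ) {κ : ℝ} (hκ : 0 < κ) :
    HasDerivAt (effRate c B) ((B - xi c B κ) / (κ * (κ + 1) * exp (c * κ))) κ := by
  have hexp : HasDerivAt (fun x => 1 - B * exp (-(c * x))) (B * (exp (-(c * κ)) * c)) κ := by
    simpa using (((hasDerivAt_id κ).const_mul c).neg.exp.const_mul B).const_sub 1
  refine (hexp.mul (hasDerivAt_log_one_add_one_div hκ.ne' (by positivity))).congr_deriv ?_
  rw [xi, exp_neg]
  field_simp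
  ring

theorem stmt_6 (A χ B : ℝ) (hA : 0 < A) (hχ : 0 < χ) (hB : 1 < B)
    (Ξ : ℝ → ℝ)
    (hΞ : ∀ κ : ℝ, Ξ κ = Real.exp (A * χ * κ) -
      A * B * χ * κ * (1 + κ) * Real.log (1 + 1 / κ))
    (R : ℝ → ℝ)
    (hR : ∀ γ : ℝ, R γ = (1 - B * Real.exp (-(A * χ) / γ)) * Real.log (1 + γ)) :
    ∃ κs : ℝ, 0 < κs ∧ Ξ κs = B ∧
      (∀ κ : ℝ, 0 < κ → Ξ κ = B → κ = κs) ∧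
      Real.log B / (A * χ) ≤ κs ∧
      1 / κs ∈ Set.Ioc (0 : ℝ) (A * χ / Real.log B) ∧
      (∀ γ ∈ Set.Ioc (0 : ℝ) (A * χ / Real.log B), γ ≠ 1 / κs → R γ < R (1 / κs)) := by
  set c := A * χ
  have hc : 0 < c := mul_pos hA hχ
  have hΞ_eq : Ξ = xi c B := funext fun κ => by rw [hΞ, xi]; ring
  have hR_eq (κ : ℝ) : R (1 / κ) = effRate c B κ := by
    rw [hR, effRate, div_div_eq_mul_div, div_one, neg_mul]
  subst hΞ_eq
  obtain ⟨κs, hκs, hroot, hbelow, habove⟩ := exists_xi_eq hc hB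
  have hκs₀ : 0 < κs := (div_pos (log_pos hB) hc).trans hκs
  refine ⟨κs, hκs₀, hroot, fun κ hκ hκroot => ?_, hκs.le, ⟨by positivity, ?_⟩,
    fun γ ⟨hγ, _⟩ hγκs => ?_⟩
  · by_contra hne
    rcases lt_or_gt_of_ne hne with h | h
    · exact (hbelow κ ⟨hκ, h⟩).ne hκroot
    · exact (habove κ h).ne' hκroot
  · rw [← one_div_div (log B)]
    exact one_div_le_one_div_of_le (div_pos (log_pos hB) hc) hκs.le
  rw [← one_div_one_div γ, hR_eq, hR_eq]
  refine apply_lt_apply_of_hasDerivAt_pos_of_neg hκs₀ (fun κ hκ => hasDerivAt_effRate c B hκ)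
    (fun κ hκ => div_pos (sub_pos.2 (hbelow κ hκ)) ?_)
    (fun κ hκ => div_neg_of_neg_of_pos (sub_neg.2 (habove κ hκ)) ?_) (by positivity : 0 < 1 / γ) ?_
  · have := hκ.1
    positivity
  · have := hκs₀.trans hκ
    positivity
  · rintro h
    exact hγκs (by rw [← h, one_div_one_div])
end

section
/- Let n ≥ 1 be an integer, 0 < p̂ < q̂, σ² > 0 and z ≥ 0; set p := p̂/σ² and q := q̂/σ², and let f_U(u) := (e^{−(u−σ²)/q̂} − e^{−(u−σ²)/p̂})/(q̂ − p̂) for u ≥ σ². Then ∫_{σ²}^∞ f_U(u) · u^{−n} e^{−z/u} du = σ^{−2n} ( (q/(q−p)) Φ(q, z/σ²) − (p/(q−p)) Φ(p, z/σ²) ), where Φ(x, w) := ∫_0^∞ e^{−v} (1 + x v)^{−n} e^{−w/(1+xv)} dv. -/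
open MeasureTheory Real Set

/-! Up to the factor `(qh - ph)⁻¹`, `fU` is the difference of the two shifted exponential kernels
`u ↦ exp (-(u - σ2) / a)` for `a = qh, ph`, so the integral splits in two. The substitution
`u = σ2 + a v` turns `∫_{σ2}^∞ exp (-(u - σ2) / a) u^{-n} exp (-z / u) du` into
`a σ2^{-n} Φ(a / σ2, z / σ2)`. -/

/-- `Phi n x w = ∫_0^∞ e^{−v} (1 + x v)^{−n} e^{−w/(1+xv)} dv`. -/
noncomputable def Phi (n : ℕ) (x w : ℝ) : ℝ :=
  ∫ v in Set.Ioi (0 : ℝ),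
    Real.exp (-v) * (1 + x * v) ^ (-(n : ℤ)) * Real.exp (-w / (1 + x * v))

theorem integral_Ioi_comp_mul_add {E : Type*} [NormedAddCommGroup E] [NormedSpace ℝ E]
    (g : ℝ → E) (c : ℝ) {b : ℝ} (hb : 0 < b) :
    ∫ x in Ioi 0, g (b * x + c) = b⁻¹ • ∫ x in Ioi c, g x := by
  have hshift := (measurePreserving_add_right volume c).setIntegral_preimage_emb
    (MeasurableEquiv.addRight c).measurableEmbedding g (Ioi c)
  rw [integral_comp_mul_left_Ioi (fun y => g (y + c)) 0 hb, mul_zero]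
  simpa using congrArg (b⁻¹ • ·) hshift

theorem integrableOn_exp_neg_sub_div_mul {c a C : ℝ} {g : ℝ → ℝ} (ha : 0 < a)
    (hg : AEStronglyMeasurable g (volume.restrict (Ioi c))) (hC : ∀ u ∈ Ioi c, ‖g u‖ ≤ C) :
    IntegrableOn (fun u => exp (-(u - c) / a) * g u) (Ioi c) := by
  have hexp : IntegrableOn (fun u => exp (c / a) * exp (-a⁻¹ * u)) (Ioi c) :=
    (exp_neg_integrableOn_Ioi c (inv_pos.mpr ha)).const_mul _
  refine (hexp.congr_fun (fun u _ => ?_) measurableSet_Ioi).mul_bdd hg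
    ((ae_restrict_mem measurableSet_Ioi).mono hC)
  rw [← exp_add]
  congr 1
  ring

theorem norm_zpow_neg_mul_exp_neg_div_le (n : ℕ) (z : ℝ) {c u : ℝ} (hc : 0 < c) (hu : c ≤ u) :
    ‖u ^ (-(n : ℤ)) * exp (-z / u)‖ ≤ c ^ (-(n : ℤ)) * exp (|z| / c) := by
  have hu0 : 0 < u := hc.trans_le hu
  rw [norm_mul, norm_of_nonneg (by positivity), norm_of_nonneg (exp_pos _).le]
  have hpow : u ^ (-(n : ℤ)) ≤ c ^ (-(n : ℤ)) := by
    rw [zpow_neg, zpow_neg, zpow_natCast, zpow_natCast]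
    gcongr
  have hexp : -z / u ≤ |z| / c :=
    calc -z / u ≤ |z| / u := by gcongr; exact neg_le_abs z
      _ ≤ |z| / c := by gcongr
  gcongr

theorem integral_Ioi_exp_mul_eq_Phi (n : ℕ) (z : ℝ) {a σ2 : ℝ} (ha : 0 < a) (hσ : 0 < σ2) :
    ∫ u in Ioi σ2, exp (-(u - σ2) / a) * (u ^ (-(n : ℤ)) * exp (-z / u)) =
      a * σ2 ^ (-(n : ℤ)) * Phi n (a / σ2) (z / σ2) := by
  set F : ℝ → ℝ := fun u => exp (-(u - σ2) / a) * (u ^ (-(n : ℤ)) * exp (-z / u))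
  have hPhi : Phi n (a / σ2) (z / σ2) = ∫ v in Ioi 0, σ2 ^ (n : ℤ) * F (a * v + σ2) := by
    refine setIntegral_congr_fun measurableSet_Ioi fun v (hv : 0 < v) => ?_
    have hu : 1 + a / σ2 * v = (a * v + σ2) / σ2 := by field_simp; ring
    have hv : -(a * v + σ2 - σ2) / a = -v := by field_simp; ring
    simp only [F, hu, hv, div_zpow, zpow_neg, inv_div]
    field_simp
  rw [hPhi, integral_const_mul, integral_Ioi_comp_mul_add F σ2 ha, smul_eq_mul, zpow_neg]
  field_simp

theorem stmt_8_general (n : ℕ) (ph qh σ2 z : ℝ) (hph : 0 < ph) (hpq : ph < qh)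
    (hσ : 0 < σ2) (p q : ℝ) (hp : p = ph / σ2) (hq : q = qh / σ2)
    (fU : ℝ → ℝ)
    (hfU : ∀ u, σ2 ≤ u →
      fU u = (Real.exp (-(u - σ2) / qh) - Real.exp (-(u - σ2) / ph)) / (qh - ph)) :
    ∫ u in Set.Ici σ2, fU u * (u ^ (-(n : ℤ)) * Real.exp (-z / u)) =
      σ2 ^ (-(n : ℤ)) *
        (q / (q - p) * Phi n q (z / σ2) - p / (q - p) * Phi n p (z / σ2)) := by
  have hqh : 0 < qh := hph.trans hpq
  set g : ℝ → ℝ := fun u => u ^ (-(n : ℤ)) * exp (-z / u)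
  have integrable {a : ℝ} (ha : 0 < a) :
      IntegrableOn (fun u => exp (-(u - σ2) / a) * g u) (Ioi σ2) :=
    integrableOn_exp_neg_sub_div_mul ha (by fun_prop)
      fun u hu => norm_zpow_neg_mul_exp_neg_div_le n z hσ (le_of_lt hu)
  have hsplit : ∫ u in Ioi σ2, fU u * g u = (qh - ph)⁻¹ *
      ((∫ u in Ioi σ2, exp (-(u - σ2) / qh) * g u) -
        ∫ u in Ioi σ2, exp (-(u - σ2) / ph) * g u) := by
    rw [← integral_sub (integrable hqh) (integrable hph), ← integral_const_mul]
    refine setIntegral_congr_fun measurableSet_Ioi fun u hu => ?_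
    rw [hfU u (le_of_lt hu)]
    ring
  rw [integral_Ici_eq_integral_Ioi, hsplit, integral_Ioi_exp_mul_eq_Phi n z hqh hσ,
    integral_Ioi_exp_mul_eq_Phi n z hph hσ, hp, hq]
  have hqp : qh - ph ≠ 0 := sub_ne_zero.mpr hpq.ne'
  field_simp

theorem stmt_8 (n : ℕ) (hn : 1 ≤ n) (ph qh σ2 z : ℝ) (hph : 0 < ph) (hpq : ph < qh)
    (hσ : 0 < σ2) (hz : 0 ≤ z) (p q : ℝ) (hp : p = ph / σ2) (hq : q = qh / σ2)
    (fU : ℝ → ℝ)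
    (hfU : ∀ u, σ2 ≤ u →
      fU u = (Real.exp (-(u - σ2) / qh) - Real.exp (-(u - σ2) / ph)) / (qh - ph)) :
    ∫ u in Set.Ici σ2, fU u * (u ^ (-(n : ℤ)) * Real.exp (-z / u)) =
      σ2 ^ (-(n : ℤ)) *
        (q / (q - p) * Phi n q (z / σ2) - p / (q - p) * Phi n p (z / σ2)) :=
  stmt_8_general n ph qh σ2 z hph hpq hσ p q hp hq fU hfU
end

section
/- Let G, E, F > 0 and define h(τ) := (1 − τ) ln(1 + Gτ/(Eτ + F)) for τ ∈ (0,1). Then h is twice differentiable on (0,1) with h″(τ) = −G·F·(2E²τ + F(G + 2F + Gτ) + 2E(F + Gτ + Fτ)) / ((Eτ + F)²((G + E)τ + F)²), which is strictly negative for all τ ∈ (0,1); hence h is strictly concave on (0,1). -/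
/-!
Write `h = (1 - τ) g` with `g τ = log (1 + Gτ/(Eτ + F))`. Since `1 + Gτ/(Eτ + F)` is a ratio
of two affine functions, `g' = GF / ((Eτ + F)((G + E)τ + F))`, so `h'' = -2 g' + (1 - τ) g''`,
and both terms are negative on `(0, 1)`: `g'` is positive and, as the reciprocal of a product
of two positive increasing affine functions, decreasing.
-/

open Real Set

section AffineDerivatives

variable {x : ℝ}

theorem hasDerivAt_affine (a b : ℝ) (x : ℝ) : HasDerivAt (fun y => a * y + b) a x := by
  simpa using ((hasDerivAt_id x).const_mul a).add_const b

theorem hasDerivAt_one_sub_mul {g : ℝ → ℝ} {g' : ℝ} (hg : HasDerivAt g g' x) :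
    HasDerivAt (fun y => (1 - y) * g y) (-g x + (1 - x) * g') x := by
  simpa using ((hasDerivAt_id' x).const_sub 1).fun_mul hg

theorem hasDerivAt_const_div_mul_affine (k a b c d : ℝ) (hab : a * x + b ≠ 0)
    (hcd : c * x + d ≠ 0) :
    HasDerivAt (fun y => k / ((a * y + b) * (c * y + d)))
      (-(k * (a * (c * x + d) + c * (a * x + b))) / ((a * x + b) * (c * x + d)) ^ 2) x := by
  refine ((hasDerivAt_const x k).fun_div ((hasDerivAt_affine a b x).mul
    (hasDerivAt_affine c d x)) (mul_ne_zero hab hcd)).congr_deriv ?_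
  simp only [Pi.mul_apply]
  ring

theorem hasDerivAt_log_one_add_div_affine (G E F : ℝ) (hB : E * x + F ≠ 0)
    (hA : (G + E) * x + F ≠ 0) :
    HasDerivAt (fun y => log (1 + G * y / (E * y + F)))
      (G * F / ((E * x + F) * ((G + E) * x + F))) x := by
  have hq : HasDerivAt (fun y => G * y / (E * y + F))
      ((G * (E * x + F) - G * x * E) / (E * x + F) ^ 2) x := by
    simpa using ((hasDerivAt_id' x).const_mul G).fun_div (hasDerivAt_affine E F x) hB
  have harg : 1 + G * x / (E * x + F) ≠ 0 := by
    rw [one_add_div hB]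
    exact div_ne_zero (by convert hA using 1; ring) hB
  convert ((hq.const_add 1).log harg) using 1
  field_simp
  ring

end AffineDerivatives

theorem hasDerivAt_deriv_of_forall_mem {𝕜 V : Type*} [NontriviallyNormedField 𝕜]
    [NormedAddCommGroup V] [NormedSpace 𝕜 V] {f f' : 𝕜 → V} {f'' : V} {x : 𝕜} {s : Set 𝕜}
    (hs : IsOpen s) (hf : ∀ y ∈ s, HasDerivAt f (f' y) y) (hx : x ∈ s)
    (hf' : HasDerivAt f' f'' x) :
    HasDerivAt (deriv f) f'' x :=
  hf'.congr_of_eventuallyEq <|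
    Filter.eventually_of_mem (hs.mem_nhds hx) fun y hy => (hf y hy).deriv

theorem hasDerivAt_deriv_one_sub_mul_log_one_add_div {G E F τ : ℝ} {s : Set ℝ} (hs : IsOpen s)
    (hB : ∀ y ∈ s, E * y + F ≠ 0) (hA : ∀ y ∈ s, (G + E) * y + F ≠ 0) (hτ : τ ∈ s) :
    HasDerivAt (deriv fun y => (1 - y) * log (1 + G * y / (E * y + F)))
      (-(G * F * (2 * E ^ 2 * τ + F * (G + 2 * F + G * τ) + 2 * E * (F + G * τ + F * τ))) /
        ((E * τ + F) ^ 2 * ((G + E) * τ + F) ^ 2)) τ := by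
  have hg (y) (hy : y ∈ s) := hasDerivAt_log_one_add_div_affine G E F (hB y hy) (hA y hy)
  have hg' := hasDerivAt_const_div_mul_affine (G * F) E F (G + E) F (hB τ hτ) (hA τ hτ)
  refine hasDerivAt_deriv_of_forall_mem hs (fun y hy => hasDerivAt_one_sub_mul (hg y hy)) hτ
    (((hg τ hτ).neg.add (hasDerivAt_one_sub_mul hg')).congr_deriv ?_)
  have := hB τ hτ
  have := hA τ hτ
  field_simp
  ring

theorem secondDeriv_formula_neg {G E F τ : ℝ} (hG : 0 < G) (hE : 0 < E) (hF : 0 < F)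
    (hτ : 0 ≤ τ) :
    -(G * F * (2 * E ^ 2 * τ + F * (G + 2 * F + G * τ) + 2 * E * (F + G * τ + F * τ))) /
      ((E * τ + F) ^ 2 * ((G + E) * τ + F) ^ 2) < 0 :=
  div_neg_of_neg_of_pos (neg_neg_of_pos (by positivity)) (by positivity)

theorem stmt_13 (G E F : ℝ) (hG : 0 < G) (hE : 0 < E) (hF : 0 < F)
    (h : ℝ → ℝ)
    (hh : ∀ τ : ℝ, h τ = (1 - τ) * Real.log (1 + G * τ / (E * τ + F))) :
    (∀ τ ∈ Set.Ioo (0 : ℝ) 1,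
      DifferentiableAt ℝ h τ ∧ DifferentiableAt ℝ (deriv h) τ ∧
      deriv (deriv h) τ =
        -(G * F * (2 * E ^ 2 * τ + F * (G + 2 * F + G * τ) +
            2 * E * (F + G * τ + F * τ))) /
          ((E * τ + F) ^ 2 * ((G + E) * τ + F) ^ 2) ∧
      deriv (deriv h) τ < 0) ∧
    StrictConcaveOn ℝ (Set.Ioo (0 : ℝ) 1) h := by
  obtain rfl : h = fun τ => (1 - τ) * log (1 + G * τ / (E * τ + F)) := funext hh
  have hB : ∀ τ ∈ Ioo (0 : ℝ) 1, E * τ + F ≠ 0 := fun τ hτ => by nlinarith [hτ.1]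
  have hA : ∀ τ ∈ Ioo (0 : ℝ) 1, (G + E) * τ + F ≠ 0 := fun τ hτ => by nlinarith [hτ.1]
  have hd1 (τ) (hτ : τ ∈ Ioo (0 : ℝ) 1) :=
    hasDerivAt_one_sub_mul (hasDerivAt_log_one_add_div_affine G E F (hB τ hτ) (hA τ hτ))
  have hd2 (τ) (hτ : τ ∈ Ioo (0 : ℝ) 1) :=
    hasDerivAt_deriv_one_sub_mul_log_one_add_div isOpen_Ioo hB hA hτ
  have hneg (τ) (hτ : τ ∈ Ioo (0 : ℝ) 1) :=
    (hd2 τ hτ).deriv ▸ secondDeriv_formula_neg hG hE hF hτ.1.le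
  refine ⟨fun τ hτ => ⟨(hd1 τ hτ).differentiableAt, (hd2 τ hτ).differentiableAt,
    (hd2 τ hτ).deriv, hneg τ hτ⟩, strictConcaveOn_of_deriv2_neg' (convex_Ioo 0 1)
    (fun τ hτ => (hd1 τ hτ).continuousAt.continuousWithinAt) hneg⟩
end
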